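/- arXiv:1309.7161 — 4 statements merged into one kernel-verified Lean document; each statement's English description precedes it below -/
import Mathlib

section
/- Let λ, δ be nonzero constants. The point transformation t' = 1/t, x' = -x/t, u' = t·u - x maps solutions u(t,x) of u_t + u u_x + λ t² u_{xxx} + δ t⁴ u_{xxxxx} = 0 (for t > 0) to solutions u'(t',x') of u'_{t'} + u' u'_{x'} + (λ/t') u'_{x'x'x'} + (δ/t') u'_{x'x'x'x'x'} = 0. -/
open Function Topology

lemma iteratedDeriv_add' {k : ℕ} {f g : ℝ → ℝ} (hf : ContDiff ℝ k f) (hg : ContDiff ℝ k g)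
    (x : ℝ) :
    iteratedDeriv k (fun z => f z + g z) x = iteratedDeriv k f x + iteratedDeriv k g x := by
  simp only [← iteratedDerivWithin_univ]
  exact iteratedDerivWithin_add (Set.mem_univ x) uniqueDiffOn_univ hf.contDiffWithinAt hg.contDiffWithinAt

lemma iteratedDeriv_cmul {k : ℕ} {f : ℝ → ℝ} (hf : ContDiff ℝ k f) (c : ℝ) (x : ℝ) :
    iteratedDeriv k (fun z => c * f z) x = c * iteratedDeriv k f x := by
  simp only [← iteratedDerivWithin_univ]
  exact iteratedDerivWithin_const_mul (Set.mem_univ x) uniqueDiffOn_univ c hf.contDiffWithinAt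

lemma iteratedDeriv_const0 (m : ℕ) (c : ℝ) :
    iteratedDeriv (m + 1) (fun _ : ℝ => c) = fun _ => 0 := by
  induction m with
  | zero => funext x; simp [iteratedDeriv_one]
  | succ m ih => rw [iteratedDeriv_succ, ih]; funext x; simp

lemma iteratedDeriv_linear0 (m : ℕ) (B : ℝ) :
    iteratedDeriv (m + 2) (fun z : ℝ => B * z) = fun _ => 0 := by
  rw [show m + 2 = (m + 1) + 1 from rfl, iteratedDeriv_succ']
  have : deriv (fun z : ℝ => B * z) = fun _ : ℝ => B := by
    funext z; simpa using ((hasDerivAt_id z).const_mul B).deriv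
  rw [this, iteratedDeriv_const0]


/-- Partial derivative in time of a function u(t,x). -/
noncomputable def Dt (u : ℝ → ℝ → ℝ) (t x : ℝ) : ℝ := deriv (fun s => u s x) t

/-- k-th partial derivative in space of a function u(t,x). -/
noncomputable def Dx (u : ℝ → ℝ → ℝ) (k : ℕ) (t x : ℝ) : ℝ := iteratedDeriv k (u t) x

theorem stmt2 (lam δ : ℝ) (hlam : lam ≠ 0) (hδ : δ ≠ 0)
    (u v : ℝ → ℝ → ℝ)
    (hu : ContDiff ℝ (⊤ : ℕ∞) (Function.uncurry u)) (hv : ContDiff ℝ (⊤ : ℕ∞) (Function.uncurry v))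
    (hrel : ∀ t x : ℝ, 0 < t → v (1/t) (-x/t) = t * u t x - x)
    (hsol : ∀ t x : ℝ, 0 < t →
      Dt u t x + u t x * Dx u 1 t x + lam * t^2 * Dx u 3 t x + δ * t^4 * Dx u 5 t x = 0) :
    ∀ t' x' : ℝ, 0 < t' →
      Dt v t' x' + v t' x' * Dx v 1 t' x'
        + (lam / t') * Dx v 3 t' x' + (δ / t') * Dx v 5 t' x' = 0 := by
  intro s y hs
  have hs' : s ≠ 0 := hs.ne'
  have hts : (0:ℝ) < s⁻¹ := inv_pos.mpr hs
  have hF : Differentiable ℝ (uncurry u) := hu.differentiable (by simp)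
  have hut : ∀ a : ℝ, ContDiff ℝ (⊤ : ℕ∞) (u a) := fun a =>
    hu.comp (contDiff_const.prodMk contDiff_id)
  -- partial derivatives via fderiv
  have hderivT : ∀ a b : ℝ, HasDerivAt (fun a' => u a' b)
      (fderiv ℝ (uncurry u) (a, b) (1, 0)) a := fun a b =>
    by have := (hF (a, b)).hasFDerivAt.comp_hasDerivAt a ((hasDerivAt_id a).prodMk (hasDerivAt_const a b)); exact this
  have hderivX : ∀ a b : ℝ, HasDerivAt (fun b' => u a b')
      (fderiv ℝ (uncurry u) (a, b) (0, 1)) b := fun a b =>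
    by have := (hF (a, b)).hasFDerivAt.comp_hasDerivAt b ((hasDerivAt_const b a).prodMk (hasDerivAt_id b)); exact this
  have hDtu : ∀ a b : ℝ, Dt u a b = fderiv ℝ (uncurry u) (a, b) (1, 0) := fun a b =>
    (hderivT a b).deriv
  have hDx1u : ∀ a b : ℝ, Dx u 1 a b = fderiv ℝ (uncurry u) (a, b) (0, 1) := by
    intro a b
    rw [Dx, iteratedDeriv_one]
    exact (hderivX a b).deriv
  have hlin : ∀ p : ℝ × ℝ, ∀ a b : ℝ, fderiv ℝ (uncurry u) p (a, b)
      = a * fderiv ℝ (uncurry u) p (1, 0) + b * fderiv ℝ (uncurry u) p (0, 1) := by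
    intro p a b
    have h : ((a, b) : ℝ × ℝ) = a • ((1:ℝ), (0:ℝ)) + b • ((0:ℝ), (1:ℝ)) := by
      simp [Prod.ext_iff]
    rw [h, map_add, map_smul, map_smul, smul_eq_mul, smul_eq_mul]
  -- explicit formula for v
  have hform : ∀ a : ℝ, 0 < a → ∀ z : ℝ, v a z = a⁻¹ * u a⁻¹ (-(a⁻¹ * z)) + a⁻¹ * z := by
    intro a ha z
    have h := hrel a⁻¹ (-(a⁻¹ * z)) (inv_pos.mpr ha)
    have e1 : (1:ℝ)/a⁻¹ = a := by field_simp
    have e2 : -(-(a⁻¹ * z))/a⁻¹ = z := by field_simp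
    rw [e1, e2] at h
    rw [h]; ring
  -- space derivatives of v
  have hvs : v s = fun z => s⁻¹ * u s⁻¹ (-s⁻¹ * z) + s⁻¹ * z := by
    funext z
    rw [hform s hs z, neg_mul]
  have key : ∀ k : ℕ, Dx v k s y
      = s⁻¹ * ((-s⁻¹)^k * Dx u k s⁻¹ (-(s⁻¹ * y))) + iteratedDeriv k (fun z => s⁻¹ * z) y := by
    intro k
    have hcu : ContDiff ℝ (⊤ : ℕ∞) (fun z => u s⁻¹ (-s⁻¹ * z)) :=
      (hut s⁻¹).comp (contDiff_const.mul contDiff_id)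
    have hc1 : ContDiff ℝ k (fun z : ℝ => s⁻¹ * u s⁻¹ (-s⁻¹ * z)) :=
      (contDiff_const.mul hcu).of_le (by exact_mod_cast le_top)
    have hc2 : ContDiff ℝ k (fun z : ℝ => s⁻¹ * z) :=
      (contDiff_const.mul contDiff_id).of_le le_top
    rw [Dx, hvs, iteratedDeriv_add' hc1 hc2 y,
      iteratedDeriv_cmul (hcu.of_le (by exact_mod_cast le_top)) s⁻¹ y,
      congrFun (iteratedDeriv_comp_const_mul ((hut s⁻¹).of_le (by exact_mod_cast le_top)) (-s⁻¹)) y, Dx, neg_mul]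
  have hDx1v : Dx v 1 s y = s⁻¹ * ((-s⁻¹)^1 * Dx u 1 s⁻¹ (-(s⁻¹ * y))) + s⁻¹ := by
    rw [key 1, iteratedDeriv_one]
    congr 1
    simpa using ((hasDerivAt_id y).const_mul s⁻¹).deriv
  have hDx3v : Dx v 3 s y = s⁻¹ * ((-s⁻¹)^3 * Dx u 3 s⁻¹ (-(s⁻¹ * y))) := by
    have h := key 3
    rw [show (3:ℕ) = 1 + 2 from rfl, iteratedDeriv_linear0] at h
    simpa using h
  have hDx5v : Dx v 5 s y = s⁻¹ * ((-s⁻¹)^5 * Dx u 5 s⁻¹ (-(s⁻¹ * y))) := by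
    have h := key 5
    rw [show (5:ℕ) = 3 + 2 from rfl, iteratedDeriv_linear0] at h
    simpa using h
  -- time derivative of v
  have h1 : HasDerivAt (fun a : ℝ => a⁻¹) (-(s^2)⁻¹) s := hasDerivAt_inv hs'
  have h2 : HasDerivAt (fun a : ℝ => -(a⁻¹ * y)) (-(-(s^2)⁻¹ * y)) s := (h1.mul_const y).neg
  have hγ : HasDerivAt (fun a : ℝ => ((a⁻¹ : ℝ), -(a⁻¹ * y)))
      ((-(s^2)⁻¹, -(-(s^2)⁻¹ * y)) : ℝ × ℝ) s := h1.prodMk h2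
  have hφ : HasDerivAt (fun a : ℝ => u a⁻¹ (-(a⁻¹ * y)))
      (fderiv ℝ (uncurry u) (s⁻¹, -(s⁻¹ * y)) (-(s^2)⁻¹, -(-(s^2)⁻¹ * y))) s :=
    by have := (hF (s⁻¹, -(s⁻¹ * y))).hasFDerivAt.comp_hasDerivAt s hγ; exact this
  have hg : HasDerivAt (fun a : ℝ => a⁻¹ * u a⁻¹ (-(a⁻¹ * y)) + a⁻¹ * y)
      (-(s^2)⁻¹ * u s⁻¹ (-(s⁻¹ * y))
        + s⁻¹ * fderiv ℝ (uncurry u) (s⁻¹, -(s⁻¹ * y)) (-(s^2)⁻¹, -(-(s^2)⁻¹ * y))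
        + -(s^2)⁻¹ * y) s := (h1.mul hφ).add (h1.mul_const y)
  have hvt : (fun a => v a y) =ᶠ[𝓝 s] (fun a => a⁻¹ * u a⁻¹ (-(a⁻¹ * y)) + a⁻¹ * y) := by
    filter_upwards [Ioi_mem_nhds hs] with a ha using hform a ha y
  have hDtv : Dt v s y = -(s^2)⁻¹ * u s⁻¹ (-(s⁻¹ * y))
      + s⁻¹ * ((-(s^2)⁻¹) * Dt u s⁻¹ (-(s⁻¹ * y))
        + (-(-(s^2)⁻¹ * y)) * Dx u 1 s⁻¹ (-(s⁻¹ * y)))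
      + -(s^2)⁻¹ * y := by
    rw [Dt, hvt.deriv_eq, hg.deriv, hlin, hDtu, hDx1u]
  -- conclude
  have H := hsol s⁻¹ (-(s⁻¹ * y)) hts
  rw [hDtv, hform s hs y, hDx1v, hDx3v, hDx5v]
  field_simp at H ⊢
  linear_combination (-1) * H
end

section
/- Let p, q, r be real constants with p² + q² + r² ≠ 0 and suppose the discriminant D = q² − 4pr > 0. Then there exist real constants a, b, c, d with ad − bc ≠ 0 and a nonzero constant κ such that κ(pd² − qcd + rc²) = 0, κ(−2pbd + q(ad+bc) − 2rac) = 1, and κ(pb² − qab + ra²) = 0; i.e., the triple (p,q,r) is equivalent to (0,1,0) under the induced action. -/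
/-!
Let `s² = q² − 4pr` with `s ≠ 0` and `q + s ≠ 0`. The vectors `(2p, q + s)` and `(q + s, 2r)` are
both isotropic for the binary form `r x² − q x y + p y²`, and their determinant is `−2s(q + s) ≠ 0`.
Taking them as `(a, b)` and `(c, d)` kills the outer coefficients, and the middle one becomes
`2s²(q + s)`, which `κ` normalises to `1`.
-/

lemma exists_sq_eq_ne_zero_add_ne_zero {D : ℝ} (hD : 0 < D) (q : ℝ) :
    ∃ s : ℝ, s ^ 2 = D ∧ s ≠ 0 ∧ q + s ≠ 0 := by
  have hsqrt : √D ≠ 0 := (Real.sqrt_pos.mpr hD).ne'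
  by_cases h : q + √D = 0
  · -- the two square roots `±√D` differ, so `q + s` vanishes for at most one of them
    refine ⟨-√D, by simp [Real.sq_sqrt hD.le], neg_ne_zero.mpr hsqrt, ?_⟩
    intro h'
    exact hsqrt (by linarith)
  · exact ⟨√D, Real.sq_sqrt hD.le, hsqrt, h⟩

theorem stmt14_general (p q r : ℝ) (hD : q^2 - 4*p*r > 0) :
    ∃ a b c d κ : ℝ, a*d - b*c ≠ 0 ∧ κ ≠ 0 ∧
      κ*(p*d^2 - q*c*d + r*c^2) = 0 ∧
      κ*(-2*p*b*d + q*(a*d+b*c) - 2*r*a*c) = 1 ∧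
      κ*(p*b^2 - q*a*b + r*a^2) = 0 := by
  obtain ⟨s, hs2, hs, hqs⟩ := exists_sq_eq_ne_zero_add_ne_zero hD q
  have hmid : 2 * s ^ 2 * (q + s) ≠ 0 := by positivity
  refine ⟨2 * p, q + s, q + s, 2 * r, (2 * s ^ 2 * (q + s))⁻¹, ?_, inv_ne_zero hmid, ?_, ?_, ?_⟩
  · have hdet : 2 * p * (2 * r) - (q + s) * (q + s) = -2 * s * (q + s) := by
      linear_combination hs2
    rw [hdet]
    simp [hs, hqs]
  · have hiso : p * (2 * r) ^ 2 - q * (q + s) * (2 * r) + r * (q + s) ^ 2 = 0 := by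
      linear_combination r * hs2
    rw [hiso, mul_zero]
  · rw [inv_mul_eq_one₀ hmid]
    linear_combination (q + 2 * s) * hs2
  · have hiso : p * (q + s) ^ 2 - q * (2 * p) * (q + s) + r * (2 * p) ^ 2 = 0 := by
      linear_combination p * hs2
    rw [hiso, mul_zero]

theorem stmt14 (p q r : ℝ) (hne : p^2 + q^2 + r^2 ≠ 0) (hD : q^2 - 4*p*r > 0) :
    ∃ a b c d κ : ℝ, a*d - b*c ≠ 0 ∧ κ ≠ 0 ∧
      κ*(p*d^2 - q*c*d + r*c^2) = 0 ∧
      κ*(-2*p*b*d + q*(a*d+b*c) - 2*r*a*c) = 1 ∧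
      κ*(p*b^2 - q*a*b + r*a^2) = 0 :=
  stmt14_general p q r hD
end

section
/- Let ν ≥ 0 and λ, δ ≠ 0. If u(t,x) solves u_t + u u_x + λ(t²+1)^{1/2} e^{3ν arctan t} u_{xxx} + δ(t²+1)^{3/2} e^{5ν arctan t} u_{xxxxx} = 0 and has the form u(t,x) = (e^{ν arctan t}/√(t²+1)) φ(ω) + xt/(t²+1) with ω = x e^{−ν arctan t}/√(t²+1), where φ is five times differentiable, then φ satisfies δφ''''' + λφ''' + (φ − νω)φ' + νφ + ω = 0. -/
/-!
At `t = 0` the ansatz reduces to `u(0, ·) = φ`, so every `Dx u k 0` is `φ⁽ᵏ⁾` and all the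
coefficients of the equation equal `1`. Differentiating the ansatz in `t` at `t = 0` gives
`Dt u 0 ω = ν φ(ω) - ν ω φ'(ω) + ω`; substituting into the equation at `t = 0` yields the ODE.
-/

open Real

lemma hasDerivAt_exp_mul_arctan_div_sqrt_zero (c : ℝ) :
    HasDerivAt (fun s => exp (c * arctan s) / √(s ^ 2 + 1)) c 0 := by
  have hexp : HasDerivAt (fun s => exp (c * arctan s)) c 0 := by
    simpa using ((hasDerivAt_arctan 0).const_mul c).exp
  have hsqrt : HasDerivAt (fun s : ℝ => √(s ^ 2 + 1)) 0 0 := by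
    simpa using ((hasDerivAt_pow 2 (0 : ℝ)).add_const 1).sqrt (by norm_num)
  exact (hexp.div hsqrt (by norm_num)).congr_deriv (by simp)

lemma hasDerivAt_similarity_ansatz_zero {φ : ℝ → ℝ} (ν x : ℝ) (hφ : DifferentiableAt ℝ φ x) :
    HasDerivAt (fun s => exp (ν * arctan s) / √(s ^ 2 + 1)
        * φ (x * exp (-(ν * arctan s)) / √(s ^ 2 + 1)) + x * s / (s ^ 2 + 1))
      (ν * φ x - ν * x * deriv φ x + x) 0 := by
  have hω : HasDerivAt (fun s => x * exp (-(ν * arctan s)) / √(s ^ 2 + 1)) (-(ν * x)) 0 := by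
    have := (hasDerivAt_exp_mul_arctan_div_sqrt_zero (-ν)).const_mul x
    simp only [neg_mul, mul_div_assoc] at this ⊢
    exact this.congr_deriv (by ring)
  have hφω : HasDerivAt (fun s => φ (x * exp (-(ν * arctan s)) / √(s ^ 2 + 1)))
      (deriv φ x * -(ν * x)) 0 := by
    refine HasDerivAt.comp (h₂ := φ) 0 ?_ hω
    simpa using hφ.hasDerivAt
  have hlin : HasDerivAt (fun s : ℝ => x * s / (s ^ 2 + 1)) x 0 :=
    (((hasDerivAt_id (0 : ℝ)).const_mul x).div
      ((hasDerivAt_pow 2 (0 : ℝ)).add_const 1) (by norm_num)).congr_deriv (by simp)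
  have := ((hasDerivAt_exp_mul_arctan_div_sqrt_zero ν).mul hφω).add hlin
  simp only [arctan_zero, mul_zero, neg_zero, exp_zero, ne_eq, OfNat.ofNat_ne_zero,
    not_false_eq_true, zero_pow, zero_add, sqrt_one, div_one, mul_one, one_mul] at this
  exact this.congr_deriv (by ring)

theorem stmt17_general (ν lam δ : ℝ)
    (φ : ℝ → ℝ) (hφ : ContDiff ℝ 5 φ)
    (u : ℝ → ℝ → ℝ)
    (hform : ∀ t x : ℝ, u t x = Real.exp (ν * Real.arctan t) / Real.sqrt (t^2+1)
        * φ (x * Real.exp (-(ν * Real.arctan t)) / Real.sqrt (t^2+1)) + x*t/(t^2+1))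
    (hsol : ∀ t x : ℝ, Dt u t x + u t x * Dx u 1 t x
      + lam * (t^2+1) ^ ((1:ℝ)/2) * Real.exp (3*ν*Real.arctan t) * Dx u 3 t x
      + δ * (t^2+1) ^ ((3:ℝ)/2) * Real.exp (5*ν*Real.arctan t) * Dx u 5 t x = 0) :
    ∀ ω : ℝ, δ * iteratedDeriv 5 φ ω + lam * iteratedDeriv 3 φ ω
      + (φ ω - ν*ω) * deriv φ ω + ν * φ ω + ω = 0 := by
  intro ω
  have hu0 : u 0 = φ := funext fun x => by simp [hform]
  have hDt : Dt u 0 ω = ν * φ ω - ν * ω * deriv φ ω + ω := by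
    rw [Dt, funext fun s => hform s ω]
    exact (hasDerivAt_similarity_ansatz_zero ν ω
      ((hφ.differentiable (by norm_num)) ω)).deriv
  have h := hsol 0 ω
  simp only [hDt, Dx, hu0, iteratedDeriv_one, arctan_zero, mul_zero, exp_zero, ne_eq,
    OfNat.ofNat_ne_zero, not_false_eq_true, zero_pow, zero_add, one_rpow, mul_one] at h
  linear_combination h

theorem stmt17 (ν lam δ : ℝ) (hν : 0 ≤ ν) (hl : lam ≠ 0) (hδ : δ ≠ 0)
    (φ : ℝ → ℝ) (hφ : ContDiff ℝ 5 φ)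
    (u : ℝ → ℝ → ℝ)
    (hform : ∀ t x : ℝ, u t x = Real.exp (ν * Real.arctan t) / Real.sqrt (t^2+1)
        * φ (x * Real.exp (-(ν * Real.arctan t)) / Real.sqrt (t^2+1)) + x*t/(t^2+1))
    (hsol : ∀ t x : ℝ, Dt u t x + u t x * Dx u 1 t x
      + lam * (t^2+1) ^ ((1:ℝ)/2) * Real.exp (3*ν*Real.arctan t) * Dx u 3 t x
      + δ * (t^2+1) ^ ((3:ℝ)/2) * Real.exp (5*ν*Real.arctan t) * Dx u 5 t x = 0) :
    ∀ ω : ℝ, δ * iteratedDeriv 5 φ ω + lam * iteratedDeriv 3 φ ω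
      + (φ ω - ν*ω) * deriv φ ω + ν * φ ω + ω = 0 :=
  stmt17_general ν lam δ φ hφ u hform hsol
end

section
/- Let δ₁, δ₃, δ₄ be real constants with δ₃² + δ₄² ≠ 0, let λ̃, σ̃ be nonzero constants, α a smooth nonvanishing function with antiderivative A, and set W(t) = δ₃A(t) + δ₄. If ũ(t̃,x̃) solves the constant coefficient equation ũ_{t̃} + ũũ_{x̃} + λ̃ũ_{x̃x̃x̃} + σ̃ũ_{x̃x̃x̃x̃x̃} = 0, then u(t,x) defined by W(t)u(t,x) − δ₃(x+δ₁) = ũ(t̃(t), x̃(t,x)), where t̃ = ∫ α/W² dt and x̃ = (x+δ₁)/W, solves u_t + α(t)uu_x + λ̃α(t)W(t)u_{xxx} + σ̃α(t)W(t)³u_{xxxxx} = 0 on intervals where W ≠ 0. -/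
open scoped ContDiff

lemma auxHD (f : ℝ → ℝ) (hf : ContDiff ℝ ∞ f) (a b c d : ℝ) (x : ℝ) :
    HasDerivAt (fun x => a * f ((x + d) * c) + b * (x + d))
      (a * c * deriv f ((x + d) * c) + b) x := by
  have h1 : HasDerivAt (fun x : ℝ => (x + d) * c) c x := by
    simpa using ((hasDerivAt_id x).add_const d).mul_const c
  have h2 : HasDerivAt f (deriv f ((x + d) * c)) ((x + d) * c) :=
    (hf.differentiable (by norm_num) ((x + d) * c)).hasDerivAt
  have h3 : HasDerivAt (fun x => a * f ((x + d) * c)) (a * (deriv f ((x + d) * c) * c)) x :=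
    (h2.comp x h1).const_mul a
  have h4 : HasDerivAt (fun x : ℝ => b * (x + d)) (b * 1) x :=
    ((hasDerivAt_id x).add_const d).const_mul b
  have := h3.add h4
  exact this.congr_deriv (by ring)

lemma auxA : ∀ (k : ℕ) (f : ℝ → ℝ), ContDiff ℝ ∞ f → ∀ (a c d : ℝ),
    iteratedDeriv k (fun x => a * f ((x + d) * c))
      = fun x => a * c ^ k * iteratedDeriv k f ((x + d) * c) := by
  intro k
  induction k with
  | zero => intro f hf a c d; funext x; simp
  | succ n ih =>
    intro f hf a c d
    rw [iteratedDeriv_succ']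
    have hder : deriv (fun x => a * f ((x + d) * c)) = fun x => (a * c) * deriv f ((x + d) * c) := by
      funext x
      have := auxHD f hf a 0 c d x
      simp only [zero_mul, add_zero, zero_add] at this
      rw [this.deriv]
    rw [hder, ih (deriv f) ((contDiff_infty_iff_deriv.mp hf).2) (a * c) c d]
    funext x
    rw [iteratedDeriv_succ']
    ring

lemma auxC (f : ℝ → ℝ) (hf : ContDiff ℝ ∞ f) (a b c d : ℝ) (k : ℕ) :
    iteratedDeriv (k + 2) (fun x => a * f ((x + d) * c) + b * (x + d))
      = fun x => a * c ^ (k + 2) * iteratedDeriv (k + 2) f ((x + d) * c) := by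
  have hf' := (contDiff_infty_iff_deriv.mp hf).2
  have hder : deriv (fun x => a * f ((x + d) * c) + b * (x + d))
      = fun x => (a * c) * deriv f ((x + d) * c) + b := by
    funext x; rw [(auxHD f hf a b c d x).deriv]
  rw [iteratedDeriv_succ', hder, iteratedDeriv_succ']
  have h2 : deriv (fun x => (a * c) * deriv f ((x + d) * c) + b)
      = deriv (fun x => (a * c) * deriv f ((x + d) * c)) := by
    funext x; exact deriv_add_const b
  rw [h2, ← iteratedDeriv_succ', auxA (k + 1) (deriv f) hf' (a * c) c d]
  have h3 : iteratedDeriv (k + 2) f = iteratedDeriv (k + 1) (deriv f) := iteratedDeriv_succ'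
  rw [h3]
  funext x
  ring

theorem stmt19 (δ1 δ3 δ4 lam σc : ℝ) (h34 : δ3^2 + δ4^2 ≠ 0) (hl : lam ≠ 0) (hσ : σc ≠ 0)
    (α A B W : ℝ → ℝ) (hα : ContDiff ℝ (⊤ : ℕ∞) α) (hα0 : ∀ t : ℝ, α t ≠ 0)
    (hA : ∀ t, HasDerivAt A (α t) t)
    (hW : W = fun t => δ3 * A t + δ4)
    (I : Set ℝ) (hI : IsOpen I) (hWne : ∀ t ∈ I, W t ≠ 0)
    (hB : ∀ t ∈ I, HasDerivAt B (α t / (W t)^2) t)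
    (v : ℝ → ℝ → ℝ) (hv : ContDiff ℝ (⊤ : ℕ∞) (Function.uncurry v))
    (hsol : ∀ s y : ℝ,
      Dt v s y + v s y * Dx v 1 s y + lam * Dx v 3 s y + σc * Dx v 5 s y = 0)
    (u : ℝ → ℝ → ℝ)
    (hrel : ∀ t x : ℝ, t ∈ I → W t * u t x - δ3 * (x + δ1) = v (B t) ((x + δ1) / W t)) :
    ∀ t x : ℝ, t ∈ I → Dt u t x + α t * u t x * Dx u 1 t x
      + lam * α t * W t * Dx u 3 t x + σc * α t * (W t)^3 * Dx u 5 t x = 0 := by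
  intro t x ht
  have hw : W t ≠ 0 := hWne t ht
  have hv' : ContDiff ℝ ∞ (Function.uncurry v) := hv.of_le (by simp)
  set S : ℝ := B t with hS
  set Y : ℝ := (x + δ1) * (W t)⁻¹ with hY
  -- smoothness of slices
  have hvs : ∀ s : ℝ, ContDiff ℝ ∞ (v s) := fun s =>
    hv'.comp (contDiff_const.prodMk contDiff_id)
  -- partial derivative facts
  have hF : HasFDerivAt (Function.uncurry v) (fderiv ℝ (Function.uncurry v) (S, Y)) (S, Y) :=
    (hv'.differentiable (by norm_num) (S, Y)).hasFDerivAt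
  set L := fderiv ℝ (Function.uncurry v) (S, Y) with hL
  have hL1 : L (1, 0) = Dt v S Y := by
    have hγ : HasDerivAt (fun s' : ℝ => (s', Y)) ((1:ℝ), (0:ℝ)) S :=
      (hasDerivAt_id S).prodMk (hasDerivAt_const S Y)
    have h := hF.comp_hasDerivAt S hγ
    have h2 : deriv (fun s' : ℝ => v s' Y) S = L (1, 0) := h.deriv
    simp only [Dt]
    exact h2.symm
  have hL2 : L (0, 1) = Dx v 1 S Y := by
    have hγ : HasDerivAt (fun y' : ℝ => (S, y')) ((0:ℝ), (1:ℝ)) Y :=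
      (hasDerivAt_const Y S).prodMk (hasDerivAt_id Y)
    have h := hF.comp_hasDerivAt Y hγ
    have h2 : deriv (v S) Y = L (0, 1) := h.deriv
    simp only [Dx, iteratedDeriv_one]
    exact h2.symm
  -- time derivatives of the building blocks
  have hWd : HasDerivAt W (δ3 * α t) t := by
    rw [hW]; exact ((hA t).const_mul δ3).add_const δ4
  have hWinv : HasDerivAt (fun s => (W s)⁻¹) (-(δ3 * α t) / (W t)^2) t := hWd.inv hw
  have hYd : HasDerivAt (fun s => (x + δ1) * (W s)⁻¹)
      ((x + δ1) * (-(δ3 * α t) / (W t)^2)) t := hWinv.const_mul (x + δ1)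
  have hγ : HasDerivAt (fun s => (B s, (x + δ1) * (W s)⁻¹))
      ((α t / (W t)^2, (x + δ1) * (-(δ3 * α t) / (W t)^2))) t := (hB t ht).prodMk hYd
  have hVf : HasDerivAt (fun s => v (B s) ((x + δ1) * (W s)⁻¹))
      (L ((α t / (W t)^2, (x + δ1) * (-(δ3 * α t) / (W t)^2)))) t :=
    by exact hF.comp_hasDerivAt t hγ
  have hLsum : L ((α t / (W t)^2, (x + δ1) * (-(δ3 * α t) / (W t)^2)))
      = (α t / (W t)^2) * Dt v S Y
        + ((x + δ1) * (-(δ3 * α t) / (W t)^2)) * Dx v 1 S Y := by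
    have hvec : ((α t / (W t)^2, (x + δ1) * (-(δ3 * α t) / (W t)^2)) : ℝ × ℝ)
        = (α t / (W t)^2) • ((1:ℝ), (0:ℝ))
          + ((x + δ1) * (-(δ3 * α t) / (W t)^2)) • ((0:ℝ), (1:ℝ)) := by
      simp [Prod.ext_iff]
    rw [hvec, map_add, map_smul, map_smul, hL1, hL2, smul_eq_mul, smul_eq_mul]
  rw [hLsum] at hVf
  -- the time-derivative of u at (t,x)
  have hg : HasDerivAt
      (fun s => (W s)⁻¹ * v (B s) ((x + δ1) * (W s)⁻¹) + (δ3 * (x + δ1)) * (W s)⁻¹)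
      ((-(δ3 * α t) / (W t)^2) * v S Y
        + (W t)⁻¹ * ((α t / (W t)^2) * Dt v S Y
            + ((x + δ1) * (-(δ3 * α t) / (W t)^2)) * Dx v 1 S Y)
        + (δ3 * (x + δ1)) * (-(δ3 * α t) / (W t)^2)) t :=
    (hWinv.mul hVf).add (hWinv.const_mul (δ3 * (x + δ1)))
  have hev : (fun s => u s x) =ᶠ[nhds t]
      (fun s => (W s)⁻¹ * v (B s) ((x + δ1) * (W s)⁻¹) + (δ3 * (x + δ1)) * (W s)⁻¹) := by
    filter_upwards [hI.mem_nhds ht] with s hs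
    have h1 := hrel s x hs
    have hws := hWne s hs
    rw [div_eq_mul_inv] at h1
    have h2 : u s x = (v (B s) ((x + δ1) * (W s)⁻¹) + δ3 * (x + δ1)) * (W s)⁻¹ := by
      have h3 : W s * u s x = v (B s) ((x + δ1) * (W s)⁻¹) + δ3 * (x + δ1) := by
        linarith [h1]
      rw [← h3]; field_simp
    rw [h2]; ring
  have hDtu : Dt u t x
      = (-(δ3 * α t) / (W t)^2) * v S Y
        + (W t)⁻¹ * ((α t / (W t)^2) * Dt v S Y
            + ((x + δ1) * (-(δ3 * α t) / (W t)^2)) * Dx v 1 S Y)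
        + (δ3 * (x + δ1)) * (-(δ3 * α t) / (W t)^2) :=
    (hg.congr_of_eventuallyEq hev).deriv
  -- the space description of u t
  have hut : u t = fun x' => (W t)⁻¹ * v S ((x' + δ1) * (W t)⁻¹)
      + (δ3 * (W t)⁻¹) * (x' + δ1) := by
    funext x'
    have h1 := hrel t x' ht
    rw [div_eq_mul_inv] at h1
    have h3 : W t * u t x' = v S ((x' + δ1) * (W t)⁻¹) + δ3 * (x' + δ1) := by
      linarith [h1]
    have h2 : u t x' = (v S ((x' + δ1) * (W t)⁻¹) + δ3 * (x' + δ1)) * (W t)⁻¹ := by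
      rw [← h3]; field_simp
    rw [h2]; ring
  have hux : u t x = (v S Y + δ3 * (x + δ1)) * (W t)⁻¹ := by
    simp only [hut]; ring
  have hDx1 : Dx u 1 t x = (W t)⁻¹ * (W t)⁻¹ * Dx v 1 S Y + δ3 * (W t)⁻¹ := by
    simp only [Dx, iteratedDeriv_one]
    rw [hut, (auxHD (v S) (hvs S) ((W t)⁻¹) (δ3 * (W t)⁻¹) ((W t)⁻¹) δ1 x).deriv]
  have hDx3 : Dx u 3 t x = (W t)⁻¹ * ((W t)⁻¹)^3 * Dx v 3 S Y := by
    simp only [Dx]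
    rw [hut, show (3:ℕ) = 1 + 2 from rfl,
      auxC (v S) (hvs S) ((W t)⁻¹) (δ3 * (W t)⁻¹) ((W t)⁻¹) δ1 1]
  have hDx5 : Dx u 5 t x = (W t)⁻¹ * ((W t)⁻¹)^5 * Dx v 5 S Y := by
    simp only [Dx]
    rw [hut, show (5:ℕ) = 3 + 2 from rfl,
      auxC (v S) (hvs S) ((W t)⁻¹) (δ3 * (W t)⁻¹) ((W t)⁻¹) δ1 3]
  -- use the PDE for v
  have key := hsol S Y
  have hVt : Dt v S Y = -(v S Y * Dx v 1 S Y + lam * Dx v 3 S Y + σc * Dx v 5 S Y) := by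
    linarith [key]
  rw [hDtu, hDx1, hDx3, hDx5, hux, hVt]
  field_simp
  ring
end
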